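/- Let σ > 0 and ω, c real with 4ω > c². Define ψ : ℝ × ℝ → ℂ by ψ(x,t) = e^{i ω t} φ_{ω,c}(x − c t) e^{i θ_{ω,c}(x − c t)}, where φ_{ω,c} is the solitary profile and θ_{ω,c} the traveling phase. Then ψ is a classical solution of the generalized derivative nonlinear Schrödinger equation: for all (x,t), i ∂_t ψ(x,t) + ∂_x² ψ(x,t) + i |ψ(x,t)|^{2σ} ∂_x ψ(x,t) = 0. -/

import Mathlib

open Real MeasureTheory

/-- The solitary wave profile `φ_{ω,c}` for the generalized DNLS equation. -/
noncomputable def solProfile (σ ω c : ℝ) (y : ℝ) : ℝ :=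
  ((σ + 1) * (4 * ω - c ^ 2) /
      (2 * Real.sqrt ω *
        (Real.cosh (σ * Real.sqrt (4 * ω - c ^ 2) * y) - c / (2 * Real.sqrt ω)))) ^
    (1 / (2 * σ))

/-- The traveling phase `θ_{ω,c}`. -/
noncomputable def travPhase (σ ω c : ℝ) (y : ℝ) : ℝ :=
  c / 2 * y - (1 / (2 * σ + 2)) * ∫ η in Set.Iio y, solProfile σ ω c η ^ (2 * σ)

/-- The solitary wave solution `ψ_{ω,c}(x,t) = e^{iωt} φ_{ω,c}(x-ct) e^{iθ_{ω,c}(x-ct)}`. -/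
noncomputable def solWave (σ ω c : ℝ) (x t : ℝ) : ℂ :=
  Complex.exp (Complex.I * (ω * t : ℝ)) *
    (solProfile σ ω c (x - c * t) : ℂ) *
    Complex.exp (Complex.I * (travPhase σ ω c (x - c * t) : ℂ))

/-!
Substituting `ψ(x,t) = e^{iωt} u(x - ct)` reduces gDNLS to the profile equation
`u'' - ω u + i (|u|^{2σ} - c) u' = 0`. For `u = φ e^{iθ}` with `φ' = g φ` and `θ' = T`, the
logarithmic derivative `h = g + iT` of `u` turns it into the Riccati equation
`h' + h² + i (φ^{2σ} - c) h = ω`.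

For the solitary wave, `F = φ^{2σ} = (σ+1)(4ω - c²) / (2√ω cosh(b y) - c)` with `b = σ√(4ω - c²)`,
`g = F' / (2σ F)` and `T = c/2 - F / (2σ + 2)`. The imaginary part of the Riccati equation then
follows from `F' = 2σ g F` alone, while the real part is a rational identity in `cosh(b y)` once
`sinh² = cosh² - 1` and `b² = σ² (4ω - c²)` are used. That `θ' = T` needs `F` to be integrable,
which follows from `F ≲ 1 / cosh(b y)`.
-/

namespace GDNLS

section TravelingWave

open Complex

theorem hasDerivAt_cexp_I_mul_ofReal_mul (ω t : ℝ) :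
    HasDerivAt (fun τ : ℝ => cexp (I * (ω * τ : ℝ)))
      (I * ω * cexp (I * (ω * t : ℝ))) t := by
  have := (((hasDerivAt_id t).const_mul ω).ofReal_comp.const_mul I).cexp
  simpa only [id, mul_one, mul_comm (cexp _)] using this

theorem solves_gDNLS_of_profile_ode {ψ : ℝ → ℝ → ℂ} {u u' u'' : ℝ → ℂ} {ω c p : ℝ}
    (hψ : ∀ x t, ψ x t = cexp (I * (ω * t : ℝ)) * u (x - c * t))
    (hu : ∀ y, HasDerivAt u (u' y) y) (hu' : ∀ y, HasDerivAt u' (u'' y) y)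
    (hode : ∀ y, u'' y - ω * u y + I * ((‖u y‖ ^ p : ℝ) - c) * u' y = 0) (x t : ℝ) :
    I * deriv (fun τ => ψ x τ) t + deriv (deriv fun ξ => ψ ξ t) x
      + I * ((‖ψ x t‖ ^ p : ℝ) : ℂ) * deriv (fun ξ => ψ ξ t) x = 0 := by
  simp only [hψ]
  have hin : HasDerivAt (fun τ => x - c * τ) (-c) t := by
    simpa using ((hasDerivAt_id t).const_mul c).const_sub x
  have hu_t : HasDerivAt (fun τ => u (x - c * τ)) (-c * u' (x - c * t)) t := by
    have := (hu (x - c * t)).scomp t hin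
    rwa [Complex.real_smul, Complex.ofReal_neg] at this
  have ht := (hasDerivAt_cexp_I_mul_ofReal_mul ω t).fun_mul hu_t
  set e := cexp (I * (ω * t : ℝ))
  have hx (ξ : ℝ) : HasDerivAt (fun ξ => e * u (ξ - c * t)) (e * u' (ξ - c * t)) ξ := by
    simpa using ((hu (ξ - c * t)).scomp ξ ((hasDerivAt_id ξ).sub_const (c * t))).const_mul e
  have hxx : HasDerivAt (fun ξ => e * u' (ξ - c * t)) (e * u'' (x - c * t)) x := by
    simpa using ((hu' (x - c * t)).scomp x ((hasDerivAt_id x).sub_const (c * t))).const_mul e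
  have hnorm : ‖e * u (x - c * t)‖ = ‖u (x - c * t)‖ := by
    rw [norm_mul, norm_exp_I_mul_ofReal, one_mul]
  rw [ht.deriv, funext fun ξ => (hx ξ).deriv, hxx.deriv, hnorm]
  linear_combination e * hode (x - c * t) + ω * e * u (x - c * t) * I_sq

theorem hasDerivAt_ofReal_mul_cexp_I_mul {φ θ : ℝ → ℝ} {g T y : ℝ}
    (hφ : HasDerivAt φ (g * φ y) y) (hθ : HasDerivAt θ T y) :
    HasDerivAt (fun y => (φ y : ℂ) * cexp (I * θ y))
      ((g + I * T) * ((φ y : ℂ) * cexp (I * θ y))) y := by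
  refine (hφ.ofReal_comp.fun_mul (hθ.ofReal_comp.const_mul I).cexp).congr_deriv ?_
  push_cast
  ring

theorem solves_gDNLS_of_riccati {ψ : ℝ → ℝ → ℂ} {φ θ g T g' T' : ℝ → ℝ} {ω c p : ℝ}
    (hψ : ∀ x t, ψ x t = cexp (I * (ω * t : ℝ)) * φ (x - c * t) * cexp (I * θ (x - c * t)))
    (hφ : ∀ y, HasDerivAt φ (g y * φ y) y) (hθ : ∀ y, HasDerivAt θ (T y) y)
    (hg : ∀ y, HasDerivAt g (g' y) y) (hT : ∀ y, HasDerivAt T (T' y) y)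
    (hre : ∀ y, g' y + g y ^ 2 - T y ^ 2 - (|φ y| ^ p - c) * T y = ω)
    (him : ∀ y, T' y + 2 * g y * T y + (|φ y| ^ p - c) * g y = 0) (x t : ℝ) :
    I * deriv (fun τ => ψ x τ) t + deriv (deriv fun ξ => ψ ξ t) x
      + I * ((‖ψ x t‖ ^ p : ℝ) : ℂ) * deriv (fun ξ => ψ ξ t) x = 0 := by
  set u : ℝ → ℂ := fun y => φ y * cexp (I * θ y)
  set h : ℝ → ℂ := fun y => g y + I * T y
  have hu (y : ℝ) : HasDerivAt u (h y * u y) y :=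
    hasDerivAt_ofReal_mul_cexp_I_mul (hφ y) (hθ y)
  have hh (y : ℝ) : HasDerivAt h (g' y + I * T' y) y :=
    (hg y).ofReal_comp.add ((hT y).ofReal_comp.const_mul I)
  refine solves_gDNLS_of_profile_ode (u := u) (fun x t => by rw [hψ, mul_assoc]) hu
    (fun y => (hh y).fun_mul (hu y)) (fun y => ?_) x t
  have hnorm : ‖u y‖ = |φ y| := by
    rw [norm_mul, norm_exp_I_mul_ofReal, mul_one, Complex.norm_real, Real.norm_eq_abs]
  have hre' := congrArg ((↑) : ℝ → ℂ) (hre y)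
  have him' := congrArg ((↑) : ℝ → ℂ) (him y)
  push_cast at hre' him'
  rw [hnorm]
  linear_combination u y * (hre' + I * him')
    + u y * (T y ^ 2 + (((|φ y| ^ p : ℝ) : ℂ) - c) * T y) * I_sq

end TravelingWave

theorem one_add_sq_le_four_mul_cosh (x : ℝ) : 1 + x ^ 2 ≤ 4 * cosh x := by
  rw [← cosh_abs, cosh_eq]
  nlinarith [quadratic_le_exp_of_nonneg (abs_nonneg x), add_one_le_exp (-|x|), sq_abs x]

theorem integrable_inv_cosh_mul {b : ℝ} (hb : b ≠ 0) :
    Integrable fun y => (cosh (b * y))⁻¹ := by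
  refine ((integrable_inv_one_add_sq.comp_mul_left' hb).const_mul 4).mono'
    (by fun_prop) (Filter.Eventually.of_forall fun y => ?_)
  rw [norm_inv, Real.norm_of_nonneg (cosh_pos _).le]
  rw [inv_le_iff_one_le_mul₀ (cosh_pos _), mul_right_comm, ← div_eq_mul_inv,
    one_le_div (by positivity)]
  exact one_add_sq_le_four_mul_cosh (b * y)

theorem hasDerivAt_integral_Iio {E : Type*} [NormedAddCommGroup E] [NormedSpace ℝ E]
    [CompleteSpace E] {f : ℝ → E} (hf : Integrable f) (hc : Continuous f) (y : ℝ) :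
    HasDerivAt (fun z => ∫ η in Set.Iio z, f η) (f y) y := by
  have hsplit : (fun z => ∫ η in Set.Iio z, f η)
      = fun z => (∫ η in Set.Iic 0, f η) + ∫ η in 0..z, f η := by
    funext z
    rw [← integral_Iic_eq_integral_Iio,
      ← intervalIntegral.integral_Iic_sub_Iic hf.integrableOn hf.integrableOn]
    abel
  rw [hsplit]
  exact (intervalIntegral.integral_hasDerivAt_right hf.intervalIntegrable
    (hc.stronglyMeasurableAtFilter _ _) hc.continuousAt).const_add _

theorem hasDerivAt_rpow_const_of_hasDerivAt_mul {f : ℝ → ℝ} {k y : ℝ} (p : ℝ)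
    (hf : HasDerivAt f (k * f y) y) (hpos : 0 < f y) :
    HasDerivAt (fun y => f y ^ p) (p * k * f y ^ p) y := by
  refine (hf.rpow_const (p := p) (Or.inl hpos.ne')).congr_deriv ?_
  rw [rpow_sub_one hpos.ne']
  field_simp

noncomputable def decayRate (σ ω c : ℝ) : ℝ := σ * √(4 * ω - c ^ 2)

noncomputable def profileDenom (σ ω c y : ℝ) : ℝ := 2 * √ω * cosh (decayRate σ ω c * y) - c

noncomputable def profilePow (σ ω c y : ℝ) : ℝ :=
  (σ + 1) * (4 * ω - c ^ 2) / profileDenom σ ω c y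

noncomputable def profileLogDeriv (σ ω c y : ℝ) : ℝ :=
  -(√ω * decayRate σ ω c * sinh (decayRate σ ω c * y)) / (σ * profileDenom σ ω c y)

noncomputable def phaseDeriv (σ ω c y : ℝ) : ℝ := c / 2 - profilePow σ ω c y / (2 * σ + 2)

section Profile

variable {σ ω c : ℝ}

theorem sqrt_pos_of_sq_lt (h : c ^ 2 < 4 * ω) : 0 < √ω :=
  sqrt_pos.2 (by nlinarith [sq_nonneg c])

theorem abs_lt_two_mul_sqrt (h : c ^ 2 < 4 * ω) : |c| < 2 * √ω := by
  refine abs_lt_of_sq_lt_sq ?_ (by linarith [sqrt_pos_of_sq_lt h])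
  rw [mul_pow, sq_sqrt (by nlinarith [sq_nonneg c])]
  linarith

theorem sub_abs_mul_cosh_le_profileDenom (y : ℝ) :
    (2 * √ω - |c|) * cosh (decayRate σ ω c * y) ≤ profileDenom σ ω c y := by
  unfold profileDenom
  nlinarith [le_abs_self c, abs_nonneg c, one_le_cosh (decayRate σ ω c * y)]

theorem profileDenom_pos (h : c ^ 2 < 4 * ω) (y : ℝ) : 0 < profileDenom σ ω c y :=
  lt_of_lt_of_le (mul_pos (by linarith [abs_lt_two_mul_sqrt h]) (cosh_pos _))
    (sub_abs_mul_cosh_le_profileDenom y)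

theorem profilePow_pos (hσ : 0 < σ) (h : c ^ 2 < 4 * ω) (y : ℝ) :
    0 < profilePow σ ω c y := by
  have := profileDenom_pos (σ := σ) h y
  unfold profilePow
  have : 0 < 4 * ω - c ^ 2 := by linarith
  positivity

theorem solProfile_eq (h : c ^ 2 < 4 * ω) :
    solProfile σ ω c = fun y => profilePow σ ω c y ^ (1 / (2 * σ)) := by
  have := (sqrt_pos_of_sq_lt h).ne'
  funext y
  unfold solProfile profilePow profileDenom decayRate
  field_simp

theorem solProfile_pos (hσ : 0 < σ) (h : c ^ 2 < 4 * ω) (y : ℝ) :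
    0 < solProfile σ ω c y := by
  rw [solProfile_eq h]
  exact rpow_pos_of_pos (profilePow_pos hσ h y) _

theorem solProfile_rpow (hσ : 0 < σ) (h : c ^ 2 < 4 * ω) (y : ℝ) :
    solProfile σ ω c y ^ (2 * σ) = profilePow σ ω c y := by
  rw [solProfile_eq h, ← rpow_mul (profilePow_pos hσ h y).le,
    one_div_mul_cancel (by positivity), rpow_one]

theorem abs_solProfile_rpow (hσ : 0 < σ) (h : c ^ 2 < 4 * ω) (y : ℝ) :
    |solProfile σ ω c y| ^ (2 * σ) = profilePow σ ω c y := by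
  rw [abs_of_pos (solProfile_pos hσ h y), solProfile_rpow hσ h]

theorem hasDerivAt_profileDenom (y : ℝ) :
    HasDerivAt (profileDenom σ ω c)
      (2 * √ω * decayRate σ ω c * sinh (decayRate σ ω c * y)) y := by
  refine ((((hasDerivAt_id y).const_mul (decayRate σ ω c)).cosh.const_mul
    (2 * √ω)).sub_const c).congr_deriv ?_
  simp only [id, mul_one]
  ring

theorem hasDerivAt_profilePow (hσ : 0 < σ) (h : c ^ 2 < 4 * ω) (y : ℝ) :
    HasDerivAt (profilePow σ ω c)
      (2 * σ * profileLogDeriv σ ω c y * profilePow σ ω c y) y := by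
  have hD := (profileDenom_pos (σ := σ) h y).ne'
  refine ((hasDerivAt_const y ((σ + 1) * (4 * ω - c ^ 2))).fun_div (hasDerivAt_profileDenom y)
    hD).congr_deriv ?_
  unfold profileLogDeriv profilePow
  field_simp
  ring

theorem hasDerivAt_solProfile (hσ : 0 < σ) (h : c ^ 2 < 4 * ω) (y : ℝ) :
    HasDerivAt (solProfile σ ω c) (profileLogDeriv σ ω c y * solProfile σ ω c y) y := by
  rw [solProfile_eq h]
  refine (hasDerivAt_rpow_const_of_hasDerivAt_mul (1 / (2 * σ)) (hasDerivAt_profilePow hσ h y)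
    (profilePow_pos hσ h y)).congr_deriv ?_
  field_simp

theorem hasDerivAt_profileLogDeriv (hσ : 0 < σ) (h : c ^ 2 < 4 * ω) (y : ℝ) :
    HasDerivAt (profileLogDeriv σ ω c)
      (-(√ω * decayRate σ ω c ^ 2 * (cosh (decayRate σ ω c * y) * profileDenom σ ω c y
          - 2 * √ω * sinh (decayRate σ ω c * y) ^ 2)) / (σ * profileDenom σ ω c y ^ 2)) y := by
  have hD := (profileDenom_pos (σ := σ) h y).ne'
  have hsinh := (((hasDerivAt_id y).const_mul (decayRate σ ω c)).sinh.const_mul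
    (√ω * decayRate σ ω c)).fun_neg
  refine (hsinh.fun_div ((hasDerivAt_profileDenom y).const_mul σ) (by positivity)).congr_deriv ?_
  simp only [id, mul_one]
  field_simp
  ring

theorem hasDerivAt_phaseDeriv (hσ : 0 < σ) (h : c ^ 2 < 4 * ω) (y : ℝ) :
    HasDerivAt (phaseDeriv σ ω c)
      (-(σ * profileLogDeriv σ ω c y * profilePow σ ω c y) / (σ + 1)) y := by
  refine (((hasDerivAt_profilePow hσ h y).div_const (2 * σ + 2)).const_sub
    (c / 2)).congr_deriv ?_
  field_simp

theorem continuous_profilePow (hσ : 0 < σ) (h : c ^ 2 < 4 * ω) :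
    Continuous (profilePow σ ω c) :=
  continuous_iff_continuousAt.2 fun y => (hasDerivAt_profilePow hσ h y).continuousAt

theorem integrable_profilePow (hσ : 0 < σ) (h : c ^ 2 < 4 * ω) :
    Integrable (profilePow σ ω c) := by
  have hgap : 0 < 2 * √ω - |c| := by linarith [abs_lt_two_mul_sqrt h]
  have hb : decayRate σ ω c ≠ 0 := (mul_pos hσ (sqrt_pos.2 (by linarith))).ne'
  refine ((integrable_inv_cosh_mul hb).const_mul
    ((σ + 1) * (4 * ω - c ^ 2) / (2 * √ω - |c|))).mono'
    (continuous_profilePow hσ h).aestronglyMeasurable (Filter.Eventually.of_forall fun y => ?_)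
  have hA : 0 < (σ + 1) * (4 * ω - c ^ 2) := mul_pos (by linarith) (by linarith)
  have hK : (σ + 1) * (4 * ω - c ^ 2) / (2 * √ω - |c|) * (cosh (decayRate σ ω c * y))⁻¹
      = (σ + 1) * (4 * ω - c ^ 2) / ((2 * √ω - |c|) * cosh (decayRate σ ω c * y)) := by
    field_simp
  rw [Real.norm_of_nonneg (profilePow_pos hσ h y).le, profilePow, hK]
  exact div_le_div_of_nonneg_left hA.le (mul_pos hgap (cosh_pos _))
    (sub_abs_mul_cosh_le_profileDenom y)

theorem hasDerivAt_travPhase (hσ : 0 < σ) (h : c ^ 2 < 4 * ω) (y : ℝ) :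
    HasDerivAt (travPhase σ ω c) (phaseDeriv σ ω c y) y := by
  have hphase : travPhase σ ω c
      = fun y => c / 2 * y - 1 / (2 * σ + 2) * ∫ η in Set.Iio y, profilePow σ ω c η := by
    funext y
    simp only [travPhase, solProfile_rpow hσ h]
  rw [hphase]
  refine (((hasDerivAt_id y).const_mul (c / 2)).sub ((hasDerivAt_integral_Iio
    (integrable_profilePow hσ h) (continuous_profilePow hσ h) y).const_mul _)).congr_deriv ?_
  simp only [phaseDeriv]
  ring

theorem profile_riccati_re (hσ : 0 < σ) (h : c ^ 2 < 4 * ω) (y : ℝ) :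
    -(√ω * decayRate σ ω c ^ 2 * (cosh (decayRate σ ω c * y) * profileDenom σ ω c y
          - 2 * √ω * sinh (decayRate σ ω c * y) ^ 2)) / (σ * profileDenom σ ω c y ^ 2)
      + profileLogDeriv σ ω c y ^ 2 - phaseDeriv σ ω c y ^ 2
      - (profilePow σ ω c y - c) * phaseDeriv σ ω c y = ω := by
  have hD := (profileDenom_pos (σ := σ) h y).ne'
  have hω : √ω ^ 2 = ω := sq_sqrt (by nlinarith [sq_nonneg c])
  have hb : decayRate σ ω c ^ 2 = σ ^ 2 * (4 * ω - c ^ 2) := by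
    rw [decayRate, mul_pow, sq_sqrt (by linarith)]
  unfold phaseDeriv profilePow profileLogDeriv profileDenom at *
  rw [div_pow, neg_sq, mul_pow, mul_pow, hb, sinh_sq]
  clear hb h
  generalize cosh (decayRate σ ω c * y) = C at *
  -- trade `c` for the denominator `D`, so that clearing denominators leaves a polynomial identity
  generalize hDdef : 2 * √ω * C - c = D at hD ⊢
  obtain rfl : c = 2 * √ω * C - D := by linarith
  generalize √ω = W at hω ⊢
  subst hω
  field_simp
  ring

theorem profile_riccati_im (hσ : 0 < σ) (y : ℝ) :
    -(σ * profileLogDeriv σ ω c y * profilePow σ ω c y) / (σ + 1)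
      + 2 * profileLogDeriv σ ω c y * phaseDeriv σ ω c y
      + (profilePow σ ω c y - c) * profileLogDeriv σ ω c y = 0 := by
  unfold phaseDeriv
  field_simp
  ring

end Profile

end GDNLS

open GDNLS in
theorem solWave_solves_gDNLS (σ ω c : ℝ) (hσ : 0 < σ) (h : c ^ 2 < 4 * ω) :
    ∀ x t : ℝ,
      Complex.I * deriv (fun τ => solWave σ ω c x τ) t
        + deriv (deriv (fun ξ => solWave σ ω c ξ t)) x
        + Complex.I * ((‖solWave σ ω c x t‖ ^ (2 * σ) : ℝ) : ℂ) *
            deriv (fun ξ => solWave σ ω c ξ t) x = 0 := by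
  intro x t
  refine solves_gDNLS_of_riccati (fun x t => rfl) (hasDerivAt_solProfile hσ h)
    (hasDerivAt_travPhase hσ h) (hasDerivAt_profileLogDeriv hσ h) (hasDerivAt_phaseDeriv hσ h)
    (fun y => ?_) (fun y => ?_) x t
  · rw [abs_solProfile_rpow hσ h]
    exact profile_riccati_re hσ h y
  · rw [abs_solProfile_rpow hσ h]
    exact profile_riccati_im hσ y
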